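/- Let k ≥ 2 and let G be a (simple, undirected) graph on the vertex set V = [k] × [k] (row i, column j vertices). Set m = k² + 2k − 2, and partition [m] into blocks: for i ∈ [k], block i consists of positions {(i−1)k + j : j ∈ [k]}, and block k+1 consists of the remaining 2k−2 positions {k²+1, …, k²+2k−2}. Define a multiset S of binary strings of length m as follows. (Nonedge strings) For each pair of nonadjacent vertices v = (a,b), v' = (a',b') of G with a ≠ a', the string s_{vv'} has ones exactly at positions {(a−1)k + j : j ∈ [k], j ≠ b} ∪ {(a'−1)k + j : j ∈ [k], j ≠ b'}. (Row strings) For each i ∈ [k] and each subset X of block k+1 with |X| = k−2, the string s_{i,X} has ones exactly at all positions of block i and at the positions of X. Then there exists a binary string s of length m with ones(s) = k and hamm(s, t) ≤ 3k−3 for every string t ∈ S, if and only if G contains a clique consisting of exactly one vertex from each row, i.e., a set {(i, j_i) : i ∈ [k]} of pairwise adjacent vertices. -/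

import Mathlib

/-- The set of positions `[m]` for `m = k² + 2k - 2`, partitioned into blocks:
for each `i ∈ [k]`, block `i` consists of the positions `(i, j)` for `j ∈ [k]`
(corresponding to positions `(i-1)k + j`), and block `k+1` consists of the
remaining `2k - 2` positions. -/
abbrev Pos (k : ℕ) := (Fin k × Fin k) ⊕ Fin (2 * k - 2)

/-- Hamming distance between two binary strings over a finite set of positions. -/
def hamm {I : Type*} [Fintype I] (x y : I → Bool) : ℕ :=
  (Finset.univ.filter (fun a => x a ≠ y a)).card

/-- Number of ones in a binary string over a finite set of positions. -/
def ones {I : Type*} [Fintype I] (s : I → Bool) : ℕ :=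
  (Finset.univ.filter (fun a => s a = true)).card

/-- The nonedge string `s_{vv'}` for vertices `v = (a,b)` and `v' = (a',b')`:
blocks `a` and `a'` are filled with ones except for the `b`-th position of block
`a` and the `b'`-th position of block `a'`; all other positions are zero. -/
def nonedgeStr {k : ℕ} (v v' : Fin k × Fin k) : Pos k → Bool
  | Sum.inl (i, j) =>
      decide ((i = v.1 ∧ j ≠ v.2) ∨ (i = v'.1 ∧ j ≠ v'.2))
  | Sum.inr _ => false

/-- The row string `s_{i,X}`: ones exactly at all positions of block `i` and at
the positions of `X ⊆` block `k+1`. -/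
def rowStr {k : ℕ} (i : Fin k) (X : Finset (Fin (2 * k - 2))) : Pos k → Bool
  | Sum.inl (i', _) => decide (i' = i)
  | Sum.inr t => decide (t ∈ X)

def onesSet {I : Type*} [Fintype I] (s : I → Bool) : Finset I :=
  Finset.univ.filter (fun a => s a = true)

lemma mem_onesSet {I : Type*} [Fintype I] {s : I → Bool} {a : I} :
    a ∈ onesSet s ↔ s a = true := by simp [onesSet]

lemma ones_eq {I : Type*} [Fintype I] (s : I → Bool) : ones s = (onesSet s).card := rfl

lemma hamm_add {I : Type*} [Fintype I] [DecidableEq I] (x y : I → Bool) :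
    hamm x y + 2 * (onesSet x ∩ onesSet y).card = ones x + ones y := by
  have h1 : Finset.univ.filter (fun a => x a ≠ y a) = (onesSet x \ onesSet y) ∪ (onesSet y \ onesSet x) := by
    ext a
    simp [onesSet]
    cases hx : x a <;> cases hy : y a <;> simp
  rw [hamm, h1, Finset.card_union_of_disjoint disjoint_sdiff_sdiff]
  have h2 := Finset.card_sdiff_add_card_inter (onesSet x) (onesSet y)
  have h3 := Finset.card_sdiff_add_card_inter (onesSet y) (onesSet x)
  rw [Finset.inter_comm (onesSet y) (onesSet x)] at h3
  rw [ones_eq, ones_eq]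
  omega

lemma onesSet_nonedge {k : ℕ} (v v' : Fin k × Fin k) :
    onesSet (nonedgeStr v v') =
      ((Finset.univ.erase v.2).image (fun j => (Sum.inl (v.1, j) : Pos k))) ∪
      ((Finset.univ.erase v'.2).image (fun j => (Sum.inl (v'.1, j) : Pos k))) := by
  ext p
  rcases p with ⟨i, j⟩ | t
  · simp only [mem_onesSet, Finset.mem_filter, Finset.mem_univ, true_and, nonedgeStr,
      decide_eq_true_eq, Finset.mem_union, Finset.mem_image, Finset.mem_erase,
      Sum.inl.injEq, Prod.mk.injEq]
    constructor
    · rintro (⟨rfl, hj⟩ | ⟨rfl, hj⟩)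
      · exact Or.inl ⟨j, ⟨hj, trivial⟩, rfl, rfl⟩
      · exact Or.inr ⟨j, ⟨hj, trivial⟩, rfl, rfl⟩
    · rintro (⟨a, ⟨ha, -⟩, rfl, rfl⟩ | ⟨a, ⟨ha, -⟩, rfl, rfl⟩)
      · exact Or.inl ⟨rfl, ha⟩
      · exact Or.inr ⟨rfl, ha⟩
  · simp [mem_onesSet, nonedgeStr]

lemma ones_nonedge {k : ℕ} (v v' : Fin k × Fin k) (h : v.1 ≠ v'.1) :
    ones (nonedgeStr v v') = (k - 1) + (k - 1) := by
  rw [ones_eq, onesSet_nonedge, Finset.card_union_of_disjoint, Finset.card_image_of_injective,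
    Finset.card_image_of_injective, Finset.card_erase_of_mem (Finset.mem_univ _),
    Finset.card_erase_of_mem (Finset.mem_univ _), Finset.card_univ, Fintype.card_fin]
  · intro a b hab; simpa using hab
  · intro a b hab; simpa using hab
  · rw [Finset.disjoint_left]
    rintro p hp hq
    simp only [Finset.mem_image] at hp hq
    obtain ⟨a, _, ha⟩ := hp
    obtain ⟨b, _, hb⟩ := hq
    rw [← hb] at ha
    simp only [Sum.inl.injEq, Prod.mk.injEq] at ha
    exact h ha.1

lemma onesSet_rowStr {k : ℕ} (i : Fin k) (X : Finset (Fin (2 * k - 2))) :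
    onesSet (rowStr i X) =
      (Finset.univ.image (fun j => (Sum.inl (i, j) : Pos k))) ∪ (X.image Sum.inr) := by
  ext p
  rcases p with ⟨i', j⟩ | t
  · simp only [mem_onesSet, Finset.mem_filter, Finset.mem_univ, true_and, rowStr,
      decide_eq_true_eq, Finset.mem_union, Finset.mem_image, Sum.inl.injEq, Prod.mk.injEq]
    constructor
    · rintro rfl
      exact Or.inl ⟨j, rfl, rfl⟩
    · rintro (⟨a, rfl, rfl⟩ | ⟨a, _, h⟩)
      · rfl
      · exact absurd h (by simp)
  · simp [mem_onesSet, rowStr]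

lemma ones_rowStr {k : ℕ} (i : Fin k) (X : Finset (Fin (2 * k - 2))) :
    ones (rowStr i X) = k + X.card := by
  rw [ones_eq, onesSet_rowStr, Finset.card_union_of_disjoint, Finset.card_image_of_injective,
    Finset.card_image_of_injective, Finset.card_univ, Fintype.card_fin]
  · exact Sum.inr_injective
  · intro a b hab; simpa using hab
  · rw [Finset.disjoint_left]
    rintro p hp hq
    simp only [Finset.mem_image] at hp hq
    obtain ⟨a, _, ha⟩ := hp
    obtain ⟨b, _, hb⟩ := hq
    rw [← hb] at ha
    exact absurd ha (by simp)


theorem stmt_5 (k : ℕ) (hk : 2 ≤ k) (G : SimpleGraph (Fin k × Fin k)) :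
    (∃ s : Pos k → Bool,
      ones s = k ∧
      (∀ v v' : Fin k × Fin k, v.1 ≠ v'.1 → ¬ G.Adj v v' →
        hamm s (nonedgeStr v v') ≤ 3 * k - 3) ∧
      (∀ (i : Fin k) (X : Finset (Fin (2 * k - 2))), X.card = k - 2 →
        hamm s (rowStr i X) ≤ 3 * k - 3))
    ↔ (∃ f : Fin k → Fin k,
        ∀ i i' : Fin k, i ≠ i' → G.Adj (i, f i) (i', f i')) := by
  constructor
  · rintro ⟨s, hones, hne, hrow⟩
    -- each row contains a one of s
    have hrow1 : ∀ i : Fin k, ∃ j : Fin k, s (Sum.inl (i, j)) = true := by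
      intro i
      by_contra hno
      push_neg at hno
      set T : Finset (Fin (2 * k - 2)) := Finset.univ.filter (fun t => s (Sum.inr t) = true) with hT
      have hTcard : T.card ≤ k := by
        have hsub : T.image Sum.inr ⊆ onesSet s := by
          intro p hp
          simp only [Finset.mem_image] at hp
          obtain ⟨t, ht, rfl⟩ := hp
          simp only [hT, Finset.mem_filter] at ht
          exact mem_onesSet.mpr ht.2
        calc T.card = (T.image Sum.inr).card :=
              (Finset.card_image_of_injective _ Sum.inr_injective).symm
          _ ≤ (onesSet s).card := Finset.card_le_card hsub
          _ = k := by rw [← ones_eq, hones]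
      have hcompl : k - 2 ≤ (Finset.univ \ T).card := by
        have h4 := Finset.card_sdiff_add_card_inter (Finset.univ : Finset (Fin (2*k-2))) T
        rw [Finset.univ_inter] at h4
        have hcu : (Finset.univ : Finset (Fin (2*k-2))).card = 2*k-2 := by simp
        omega
      obtain ⟨X, hXsub, hXcard⟩ := Finset.exists_subset_card_eq hcompl
      have hle := hrow i X hXcard
      have hkey := hamm_add s (rowStr i X)
      have hI : (onesSet s ∩ onesSet (rowStr i X)).card = 0 := by
        rw [Finset.card_eq_zero, Finset.eq_empty_iff_forall_notMem]
        intro p hp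
        rw [Finset.mem_inter, onesSet_rowStr, Finset.mem_union] at hp
        obtain ⟨hps, hpt | hpt⟩ := hp
        · simp only [Finset.mem_image, Finset.mem_univ, true_and] at hpt
          obtain ⟨j, rfl⟩ := hpt
          exact hno j (mem_onesSet.mp hps)
        · simp only [Finset.mem_image] at hpt
          obtain ⟨t, htX, rfl⟩ := hpt
          have := hXsub htX
          rw [Finset.mem_sdiff, hT, Finset.mem_filter] at this
          exact this.2 ⟨Finset.mem_univ _, mem_onesSet.mp hps⟩
      rw [hI, hones, ones_rowStr, hXcard] at hkey
      omega
    -- fiber counting: exactly one one per row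
    classical
    let π : Pos k → Option (Fin k) := fun p => p.elim (fun q => some q.1) (fun _ => none)
    have hsum : (onesSet s).card
        = ∑ o : Option (Fin k), ((onesSet s).filter (fun p => π p = o)).card :=
      Finset.card_eq_sum_card_fiberwise (fun x _ => Finset.mem_univ _)
    rw [Fintype.sum_option] at hsum
    have hfib1 : ∀ i : Fin k, 1 ≤ ((onesSet s).filter (fun p => π p = some i)).card := by
      intro i
      obtain ⟨j, hj⟩ := hrow1 i
      refine Finset.card_pos.mpr ⟨Sum.inl (i, j), ?_⟩
      simp only [Finset.mem_filter, mem_onesSet]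
      exact ⟨hj, rfl⟩
    have hsumge : ∀ i : Fin k, ((onesSet s).filter (fun p => π p = some i)).card ≤ 1 := by
      intro i
      have h5 : ∑ i' : Fin k, ((onesSet s).filter (fun p => π p = some i')).card
          = ((onesSet s).filter (fun p => π p = some i)).card
            + ∑ i' ∈ Finset.univ.erase i, ((onesSet s).filter (fun p => π p = some i')).card :=
        (Finset.add_sum_erase _ _ (Finset.mem_univ i)).symm
      have h6 : (Finset.univ.erase i).card • 1
          ≤ ∑ i' ∈ Finset.univ.erase i, ((onesSet s).filter (fun p => π p = some i')).card :=
        Finset.card_nsmul_le_sum _ _ _ (fun x _ => hfib1 x)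
      have h7 : (Finset.univ.erase i).card = k - 1 := by
        rw [Finset.card_erase_of_mem (Finset.mem_univ _), Finset.card_univ, Fintype.card_fin]
      have h8 : ∑ i' : Fin k, ((onesSet s).filter (fun p => π p = some i')).card ≤ k := by
        rw [← ones_eq, hones] at hsum
        omega
      rw [h7] at h6
      have h9 := hfib1 i
      have hk1 : 1 ≤ k := by omega
      simp only [smul_eq_mul, mul_one] at h6
      omega
    have huniq : ∀ i j j', s (Sum.inl (i, j)) = true → s (Sum.inl (i, j')) = true → j = j' := by
      intro i j j' hj hj'
      have hm : Sum.inl (i, j) ∈ (onesSet s).filter (fun p => π p = some i) := by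
        simp only [Finset.mem_filter, mem_onesSet]; exact ⟨hj, rfl⟩
      have hm' : Sum.inl (i, j') ∈ (onesSet s).filter (fun p => π p = some i) := by
        simp only [Finset.mem_filter, mem_onesSet]; exact ⟨hj', rfl⟩
      have := Finset.card_le_one.mp (hsumge i) _ hm _ hm'
      simpa using this
    choose f hf using hrow1
    refine ⟨f, fun i i' hii' => ?_⟩
    by_contra hadj
    have hle := hne (i, f i) (i', f i') hii' hadj
    have hkey := hamm_add s (nonedgeStr (i, f i) (i', f i'))
    rw [hones, ones_nonedge _ _ hii'] at hkey
    have hI : (onesSet s ∩ onesSet (nonedgeStr (i, f i) (i', f i'))).card = 0 := by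
      rw [Finset.card_eq_zero, Finset.eq_empty_iff_forall_notMem]
      intro p hp
      rw [Finset.mem_inter, onesSet_nonedge, Finset.mem_union] at hp
      obtain ⟨hps, hpt | hpt⟩ := hp
      · simp only [Finset.mem_image, Finset.mem_erase] at hpt
        obtain ⟨a, ⟨ha, -⟩, rfl⟩ := hpt
        exact ha (huniq i a (f i) (mem_onesSet.mp hps) (hf i))
      · simp only [Finset.mem_image, Finset.mem_erase] at hpt
        obtain ⟨a, ⟨ha, -⟩, rfl⟩ := hpt
        exact ha (huniq i' a (f i') (mem_onesSet.mp hps) (hf i'))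
    rw [hI] at hkey
    omega
  · rintro ⟨f, hf⟩
    classical
    set s : Pos k → Bool := fun p => decide (∃ i : Fin k, p = Sum.inl (i, f i)) with hs
    have hsmem : ∀ p, s p = true ↔ ∃ i : Fin k, p = Sum.inl (i, f i) := by
      intro p; simp [hs]
    have hset : onesSet s = Finset.univ.image (fun i : Fin k => (Sum.inl (i, f i) : Pos k)) := by
      ext p
      simp only [mem_onesSet, hsmem, Finset.mem_image, Finset.mem_univ, true_and]
      constructor
      · rintro ⟨i, rfl⟩; exact ⟨i, rfl⟩
      · rintro ⟨i, rfl⟩; exact ⟨i, rfl⟩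
    have hinj : Function.Injective (fun i : Fin k => (Sum.inl (i, f i) : Pos k)) := by
      intro a b hab
      injection hab with h
      exact congrArg Prod.fst h
    have honess : ones s = k := by
      rw [ones_eq, hset, Finset.card_image_of_injective _ hinj, Finset.card_univ, Fintype.card_fin]
    refine ⟨s, honess, ?_, ?_⟩
    · intro v v' hvv' hnadj
      have hkey := hamm_add s (nonedgeStr v v')
      rw [honess, ones_nonedge _ _ hvv'] at hkey
      have hI : 1 ≤ (onesSet s ∩ onesSet (nonedgeStr v v')).card := by
        refine Finset.card_pos.mpr ?_
        by_cases hb : f v.1 = v.2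
        · have hb' : f v'.1 ≠ v'.2 := by
            intro hb2
            apply hnadj
            have := hf v.1 v'.1 hvv'
            rw [hb, hb2] at this
            simpa using this
          refine ⟨Sum.inl (v'.1, f v'.1), Finset.mem_inter.mpr ⟨?_, ?_⟩⟩
          · exact mem_onesSet.mpr ((hsmem _).mpr ⟨v'.1, rfl⟩)
          · rw [mem_onesSet]
            simp only [nonedgeStr, decide_eq_true_eq]
            tauto
        · refine ⟨Sum.inl (v.1, f v.1), Finset.mem_inter.mpr ⟨?_, ?_⟩⟩
          · exact mem_onesSet.mpr ((hsmem _).mpr ⟨v.1, rfl⟩)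
          · rw [mem_onesSet]
            simp only [nonedgeStr, decide_eq_true_eq]
            tauto
      omega
    · intro i X hX
      have hkey := hamm_add s (rowStr i X)
      rw [honess, ones_rowStr, hX] at hkey
      have hI : 1 ≤ (onesSet s ∩ onesSet (rowStr i X)).card := by
        refine Finset.card_pos.mpr ⟨Sum.inl (i, f i), Finset.mem_inter.mpr ⟨?_, ?_⟩⟩
        · exact mem_onesSet.mpr ((hsmem _).mpr ⟨i, rfl⟩)
        · rw [mem_onesSet]
          simp [rowStr]
      omega
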